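/- Let X be a nonzero positive semidefinite 2^n × 2^n complex matrix and let p > 0. Then the function p ↦ ‖X‖_p is differentiable at p with derivative Ent(X^p)/(p²·‖X‖_p^{p−1}). -/

import Mathlib

noncomputable section

open scoped Matrix ComplexOrder

/-- The algebra of operators on `(ℂ²)^{⊗ n}`, as `2^n × 2^n` matrices indexed by `Fin n → Fin 2`. -/
abbrev Mq (n : ℕ) := Matrix (Fin n → Fin 2) (Fin n → Fin 2) ℂ

/-- Normalized trace `τ(X) = 2^{-n} tr X`. -/
def qTau {n : ℕ} (X : Mq n) : ℂ := ((2 : ℂ) ^ n)⁻¹ * X.trace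

/-- Real part of the normalized trace. -/
def qTauR {n : ℕ} (X : Mq n) : ℝ := (qTau X).re

/-- Normalized Hilbert–Schmidt inner product `⟨X, Y⟩ = τ(X† Y)`. -/
def qInner {n : ℕ} (X Y : Mq n) : ℂ := qTau (Xᴴ * Y)

/-- `|X| = √(X† X)`. -/
def mAbs {n : ℕ} (X : Mq n) : Mq n :=
  (Matrix.posSemidef_conjTranspose_mul_self X).1.eigenvectorUnitary.1 *
    Matrix.diagonal ((↑) ∘ Real.sqrt ∘ (Matrix.posSemidef_conjTranspose_mul_self X).1.eigenvalues) *
    (star (Matrix.posSemidef_conjTranspose_mul_self X).1.eigenvectorUnitary : Mq n)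

/-- The entropy `Ent(X) = τ(X ln X) − τ(X) ln τ(X)` (with the convention `0 ln 0 = 0`),
for positive semidefinite `X`, via the continuous functional calculus. -/
def mEnt {n : ℕ} (X : Mq n) : ℝ :=
  qTauR (cfc (fun x : ℝ => x * Real.log x) X) - qTauR X * Real.log (qTauR X)

/-- Real powers `X^p` of a positive semidefinite matrix, by functional calculus on the
support (`0 ^ p = 0` for `p ≠ 0`). -/
def mPow {n : ℕ} (X : Mq n) (p : ℝ) : Mq n := cfc (fun x : ℝ => x ^ p) X

/-- Normalized Schatten `p`-norm `‖X‖_p = (τ(|X|^p))^{1/p}`. -/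
def schatten {n : ℕ} (p : ℝ) (X : Mq n) : ℝ := qTauR (mPow (mAbs X) p) ^ (1 / p)

/-- Conditional expectation onto the `i`-th qubit being maximally mixed:
`E_i = I^{⊗(i-1)} ⊗ (τ(·) I) ⊗ I^{⊗(n-i)}`. -/
def condExpQ {n : ℕ} (i : Fin n) (X : Mq n) : Mq n :=
  Matrix.of fun a b =>
    if a i = b i then
      (2 : ℂ)⁻¹ * ∑ c : Fin 2, X (Function.update a i c) (Function.update b i c)
    else 0

/-- The Lindblad generator `K_n = Σ_i L̂_i`, where `L̂_i` acts as `L(X) = X − τ(X) I`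
on the `i`-th tensor factor. -/
def Kq (n : ℕ) (X : Mq n) : Mq n := ∑ i : Fin n, (X - condExpQ i X)

/-- The depolarizing channel on the `i`-th qubit:
`e^{-t} X + (1 - e^{-t}) τ_i(X) ⊗ I_i`. -/
def depolStep {n : ℕ} (t : ℝ) (i : Fin n) (X : Mq n) : Mq n :=
  (Real.exp (-t) : ℂ) • X + ((1 : ℂ) - (Real.exp (-t) : ℂ)) • condExpQ i X

/-- `Ψ_t^{⊗ n}`: the `n`-fold tensor power of the qubit depolarizing channel, i.e. the
composition over all qubits `i` of the depolarizing channel acting on the `i`-th factor. -/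
def psiDep {n : ℕ} (t : ℝ) (X : Mq n) : Mq n :=
  (List.finRange n).foldr (fun i Y => depolStep t i Y) X

/-- The binary entropy function `h(s) = −s ln s − (1−s) ln(1−s)`. -/
def binEnt (s : ℝ) : ℝ := -(s * Real.log s) - (1 - s) * Real.log (1 - s)

/-- `h⁻¹ : [0, ln 2] → [0, 1/2]`, the inverse of the restriction of the binary entropy
function to `[0, 1/2]`. -/
def binEntInv (y : ℝ) : ℝ := Function.invFunOn binEnt (Set.Icc 0 (1 / 2)) y

/-- `φ(ξ) = 1/2 − √(h⁻¹(ln 2 − ξ)(1 − h⁻¹(ln 2 − ξ)))`. -/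
def phiF (ξ : ℝ) : ℝ :=
  1 / 2 - Real.sqrt (binEntInv (Real.log 2 - ξ) * (1 - binEntInv (Real.log 2 - ξ)))

/-- `α(ξ) = φ(ξ)/ξ` for `ξ ∈ (0, ln 2]`, with `α(0) = 1/2` by continuous extension. -/
def alphaF (ξ : ℝ) : ℝ := if ξ = 0 then 1 / 2 else ξ⁻¹ * phiF ξ

/-! For positive semidefinite `X` we have `|X| = X`, so `‖X‖_q = f(q)^{1/q}` with
`f(q) = τ(X^q) = 2^{-n} ∑ᵢ λᵢ^q`, a positive combination of exponentials `q ↦ λᵢ^q`. Hence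
`f'(p) = 2^{-n} ∑ᵢ λᵢ^p ln λᵢ = p⁻¹ τ(X^p ln X^p)`, and the chain rule for `f(q)^{1/q}` gives
`(p f'(p) - f(p) ln f(p)) / (p² f(p)^{(p-1)/p})`, whose numerator is `Ent(X^p)`. -/

theorem Matrix.IsHermitian.trace_cfc {𝕜 ι : Type*} [RCLike 𝕜] [Fintype ι] [DecidableEq ι]
    {A : Matrix ι ι 𝕜} (hA : A.IsHermitian) (f : ℝ → ℝ) :
    (cfc f A).trace = ∑ i, (f (hA.eigenvalues i) : 𝕜) := by
  rw [hA.cfc_eq, Matrix.IsHermitian.cfc, Unitary.conjStarAlgAut_apply, Matrix.trace_mul_cycle,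
    Unitary.coe_star_mul_self, one_mul, Matrix.trace_diagonal]
  rfl

theorem Real.hasDerivAt_const_rpow_of_nonneg {a p : ℝ} (ha : 0 ≤ a) (hp : 0 < p) :
    HasDerivAt (fun q : ℝ => a ^ q) (a ^ p * Real.log a) p := by
  rcases ha.eq_or_lt with rfl | ha
  · have hzero : (fun q : ℝ => (0 : ℝ) ^ q) =ᶠ[nhds p] fun _ => 0 := by
      filter_upwards [Ioi_mem_nhds hp] with q hq using Real.zero_rpow hq.ne'
    simpa using (hasDerivAt_const p (0 : ℝ)).congr_of_eventuallyEq hzero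
  · simpa [mul_comm] using (Real.hasStrictDerivAt_const_rpow ha p).hasDerivAt

theorem Real.rpow_mul_log_rpow {x : ℝ} (hx : 0 ≤ x) {p : ℝ} (hp : p ≠ 0) :
    x ^ p * Real.log (x ^ p) = p * (x ^ p * Real.log x) := by
  rcases hx.eq_or_lt with rfl | hx
  · simp [Real.zero_rpow hp]
  · rw [Real.log_rpow hx]
    ring

theorem HasDerivAt.rpow_one_div {f : ℝ → ℝ} {f' p : ℝ} (hf : HasDerivAt f f' p)
    (hfp : 0 < f p) (hp : p ≠ 0) :
    HasDerivAt (fun q => f q ^ (1 / q))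
      ((p * f' - f p * Real.log (f p)) / (p ^ 2 * (f p ^ (1 / p)) ^ (p - 1))) p := by
  have hinv : HasDerivAt (fun q : ℝ => 1 / q) (-(1 / p ^ 2)) p := by
    simpa [one_div] using hasDerivAt_inv hp
  convert hf.rpow hinv hfp using 1
  have hpow : (f p ^ (1 / p)) ^ (p - 1) = f p / f p ^ (1 / p) := by
    rw [← Real.rpow_mul hfp.le, show 1 / p * (p - 1) = 1 - 1 / p by field_simp,
      Real.rpow_sub hfp, Real.rpow_one]
  have hpow' : f p ^ (1 / p - 1) = f p ^ (1 / p) / f p := by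
    rw [Real.rpow_sub hfp, Real.rpow_one]
  have hroot := Real.rpow_pos_of_pos hfp (1 / p)
  rw [hpow, hpow']
  field_simp
  ring

section QubitMatrices

variable {n : ℕ} {X : Mq n}

theorem qTauR_cfc (hX : X.IsHermitian) (f : ℝ → ℝ) :
    qTauR (cfc f X) = ((2 : ℝ) ^ n)⁻¹ * ∑ i, f (hX.eigenvalues i) := by
  rw [qTauR, qTau, hX.trace_cfc]
  simp only [RCLike.ofReal_eq_complex_ofReal, ← Complex.ofReal_sum]
  rw [← Complex.ofReal_ofNat, ← Complex.ofReal_pow, ← Complex.ofReal_inv, ← Complex.ofReal_mul,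
    Complex.ofReal_re]

open scoped MatrixOrder in
theorem mAbs_eq_abs (X : Mq n) : mAbs X = CFC.abs X := by
  have hXX := Matrix.posSemidef_conjTranspose_mul_self X
  calc mAbs X = cfc Real.sqrt (Xᴴ * X) := by rw [hXX.1.cfc_eq]; rfl
    _ = CFC.abs X := by
      rw [CFC.abs, Matrix.star_eq_conjTranspose, CFC.sqrt_eq_real_sqrt _ hXX.nonneg, cfcₙ_eq_cfc]

open scoped MatrixOrder in
theorem mAbs_of_posSemidef (hX : X.PosSemidef) : mAbs X = X := by
  rw [mAbs_eq_abs, CFC.abs_of_nonneg X hX.nonneg]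

theorem schatten_of_posSemidef (hX : X.PosSemidef) (q : ℝ) :
    schatten q X = qTauR (mPow X q) ^ (1 / q) := by
  rw [schatten, mAbs_of_posSemidef hX]

theorem qTauR_mPow_pos (hX : X.PosSemidef) (hX0 : X ≠ 0) (q : ℝ) : 0 < qTauR (mPow X q) := by
  obtain ⟨i, hi⟩ : ∃ i, hX.isHermitian.eigenvalues i ≠ 0 := by
    by_contra! h
    exact hX0 (hX.isHermitian.eigenvalues_eq_zero_iff.mp (funext h))
  rw [mPow, qTauR_cfc hX.isHermitian]
  refine mul_pos (by positivity) (Finset.sum_pos' (fun j _ => ?_) ⟨i, Finset.mem_univ i, ?_⟩)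
  · exact Real.rpow_nonneg (hX.eigenvalues_nonneg j) q
  · exact Real.rpow_pos_of_pos ((hX.eigenvalues_nonneg i).lt_of_ne' hi) q

theorem qTauR_mul_log_mPow (hX : X.PosSemidef) {p : ℝ} (hp : p ≠ 0) :
    qTauR (cfc (fun x : ℝ => x * Real.log x) (mPow X p))
      = p * (((2 : ℝ) ^ n)⁻¹ *
        ∑ i, hX.isHermitian.eigenvalues i ^ p * Real.log (hX.isHermitian.eigenvalues i)) := by
  rw [mPow, ← cfc_comp' (fun x : ℝ => x * Real.log x) (fun x : ℝ => x ^ p) X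
      Real.continuous_mul_log.continuousOn ((Matrix.finite_real_spectrum (A := X)).continuousOn _)
      hX.isHermitian.isSelfAdjoint, qTauR_cfc hX.isHermitian, Finset.mul_sum,
    Finset.mul_sum, Finset.mul_sum]
  refine Finset.sum_congr rfl fun i _ => ?_
  rw [Real.rpow_mul_log_rpow (hX.eigenvalues_nonneg i) hp]
  ring

theorem hasDerivAt_qTauR_mPow (hX : X.PosSemidef) {p : ℝ} (hp : 0 < p) :
    HasDerivAt (fun q => qTauR (mPow X q))
      (p⁻¹ * qTauR (cfc (fun x : ℝ => x * Real.log x) (mPow X p))) p := by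
  have hsum : (fun q => qTauR (mPow X q))
      = fun q => ((2 : ℝ) ^ n)⁻¹ * ∑ i, hX.isHermitian.eigenvalues i ^ q :=
    funext fun q => qTauR_cfc hX.isHermitian _
  rw [hsum, qTauR_mul_log_mPow hX hp.ne', inv_mul_cancel_left₀ hp.ne']
  exact (HasDerivAt.fun_sum fun i _ =>
    Real.hasDerivAt_const_rpow_of_nonneg (hX.eigenvalues_nonneg i) hp).const_mul _

end QubitMatrices

/-- The derivative of `p ↦ ‖X‖_p` is `Ent(X^p) / (p² ‖X‖_p^{p−1})` for positive
semidefinite nonzero `X` (Lemma 1(i) of the paper). -/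
theorem schatten_hasDerivAt (n : ℕ) (X : Mq n) (hX : X.PosSemidef) (hX0 : X ≠ 0)
    (p : ℝ) (hp : 0 < p) :
    HasDerivAt (fun q : ℝ => schatten q X)
      (mEnt (mPow X p) / (p ^ 2 * schatten p X ^ (p - 1))) p := by
  simp_rw [schatten_of_posSemidef hX]
  convert (hasDerivAt_qTauR_mPow hX hp).rpow_one_div (qTauR_mPow_pos hX hX0 p) hp.ne' using 2
  rw [mEnt, mul_inv_cancel_left₀ hp.ne']

end
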